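/- arXiv:2406.11436 — 2 statements merged into one kernel-verified Lean document; each statement's English description precedes it below -/
import Mathlib

section
/- (Wedderburn decomposition of semisimple circulant rings) Let k be a field, m₁,...,mₙ coprime to char(k), K = k(μ_{m₁},...,μ_{mₙ}), V = μ_{m₁}×...×μ_{mₙ}, and S ⊆ V a set of representatives of the orbits of the coordinatewise Gal(K/k)-action. Then the map f ↦ (f(x))_{x∈S} is a ring isomorphism from k[X₁,...,Xₙ]/(X₁^{m₁}-1,...,Xₙ^{mₙ}-1) onto ⊕_{x∈S} k(x), and [k(x):k] = #Orb(x) for each x ∈ S. -/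
/-!
Evaluation at a point `x` of `V = μ_{m₁} × ⋯ × μ_{mₙ}` is a `k`-algebra map from the circulant
ring `R` to `k(x)`. The reduced monomials `X^a`, `aᵢ < mᵢ`, span `R`, and evaluated on `V` they
are the distinct characters of the group `V`, hence linearly independent by Dedekind's lemma.
So they form a basis, `dim R = |V|`, and an element of `R` vanishing on all of `V` is zero.
Since `σ (f x) = f (σ x)`, vanishing on the representatives `S` already forces vanishing on `V`,
so `f ↦ (f x)_{x ∈ S}` is injective. Finally `[k(x) : k]` is the index of the stabilizer of `x`
in `Gal(K/k)`, i.e. `#Orb(x)`, so the target also has dimension `∑_{x ∈ S} #Orb(x) = |V|`.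
-/

open MvPolynomial

theorem Set.natCard_eq_sum_natCard_of_existsUnique {α β : Type*} {V : Set α} [Finite V]
    {S : Finset β} {O : β → Set α} (hO : ∀ x ∈ S, O x ⊆ V)
    (hV : ∀ y ∈ V, ∃! x, x ∈ S ∧ y ∈ O x) :
    Nat.card V = ∑ x ∈ S, Nat.card (O x) := by
  have (x : S) : Finite (O x) := Finite.Set.subset V (hO x x.2)
  let f : (Σ x : S, O x) → V := fun p => ⟨p.2, hO _ p.1.2 p.2.2⟩
  have hf : Function.Bijective f := by
    constructor
    · rintro ⟨x, y, hy⟩ ⟨x', y', hy'⟩ h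
      obtain rfl : y = y' := congrArg Subtype.val h
      obtain rfl : x = x' := Subtype.ext ((hV y (hO _ x.2 hy)).unique ⟨x.2, hy⟩ ⟨x'.2, hy'⟩)
      rfl
    · rintro ⟨y, hy⟩
      obtain ⟨x, ⟨hx, hyx⟩, -⟩ := hV y hy
      exact ⟨⟨⟨x, hx⟩, y, hyx⟩, rfl⟩
  rw [← Nat.card_congr (Equiv.ofBijective f hf), Nat.card_sigma,
    Finset.sum_coe_sort S fun x => Nat.card (O x)]

section

variable {ι : Type*}

def rootsOfUnityPi (m : ι → ℕ) (M : Type*) [CommMonoid M] : Submonoid (ι → M) where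
  carrier := {y | ∀ i, y i ^ m i = 1}
  one_mem' _ := one_pow _
  mul_mem' hy hz i := by rw [Pi.mul_apply, mul_pow, hy i, hz i, one_mul]

theorem natCard_rootsOfUnityPi [Fintype ι] {m : ι → ℕ} (hm : ∀ i, 0 < m i) {L : Type*}
    [CommRing L] [IsDomain L] {ζ : ι → L} (hζ : ∀ i, IsPrimitiveRoot (ζ i) (m i)) :
    Nat.card (rootsOfUnityPi m L) = ∏ i, m i := by
  refine (Nat.card_congr (Equiv.subtypePiEquivPi (p := fun i (z : L) => z ^ m i = 1))).trans ?_
  rw [Nat.card_pi]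
  refine Finset.prod_congr rfl fun i _ => ?_
  refine (Nat.card_congr (Equiv.subtypeEquivRight fun z => ?_)).trans
    ((Nat.card_eq_finsetCard _).trans (hζ i).card_nthRootsFinset)
  rw [Polynomial.mem_nthRootsFinset (hm i)]

def prodPowHom [Fintype ι] (M : Type*) [CommMonoid M] (a : ι → ℕ) : (ι → M) →* M where
  toFun y := ∏ i, y i ^ a i
  map_one' := by simp
  map_mul' y z := by simp [mul_pow, Finset.prod_mul_distrib]

theorem prodPowHom_mulSingle [Fintype ι] [DecidableEq ι] {M : Type*} [CommMonoid M] (a : ι → ℕ)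
    (i : ι) (z : M) : prodPowHom M a (Pi.mulSingle i z) = z ^ a i := by
  simp [prodPowHom, Pi.mulSingle_apply, ite_pow]

theorem linearIndependent_prodPowHom [Fintype ι] {m : ι → ℕ} {L : Type*} [Field L]
    {ζ : ι → L} (hζ : ∀ i, IsPrimitiveRoot (ζ i) (m i)) :
    LinearIndependent L fun a : (∀ i, Fin (m i)) => fun y : rootsOfUnityPi m L =>
      prodPowHom L (fun i => a i) y := by
  classical
  let χ (a : ∀ i, Fin (m i)) : rootsOfUnityPi m L →* L :=
    (prodPowHom L fun i => a i).comp (rootsOfUnityPi m L).subtype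
  have hχ : Function.Injective χ := by
    intro a b hab
    funext i
    have hζi : Pi.mulSingle i (ζ i) ∈ rootsOfUnityPi m L := by
      intro j
      rcases eq_or_ne j i with rfl | hj
      · simpa using (hζ j).pow_eq_one
      · simp [hj]
    have : prodPowHom L (fun j => a j) (Pi.mulSingle i (ζ i)) =
        prodPowHom L (fun j => b j) (Pi.mulSingle i (ζ i)) := DFunLike.congr_fun hab ⟨_, hζi⟩
    rw [prodPowHom_mulSingle, prodPowHom_mulSingle] at this
    exact Fin.ext ((hζ i).pow_inj (a i).2 (b i).2 this)
  exact (linearIndependent_monoidHom _ L).comp χ hχ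

noncomputable section Circulant

variable (R : Type*) [CommRing R] (m : ι → ℕ)

abbrev circulantIdeal : Ideal (MvPolynomial ι R) :=
  Ideal.span (Set.range fun i => X i ^ m i - 1)

abbrev CirculantAlgebra := MvPolynomial ι R ⧸ circulantIdeal R m

def circulantMonomial [Fintype ι] (a : ∀ i, Fin (m i)) : CirculantAlgebra R m :=
  Ideal.Quotient.mk _ (∏ i, X i ^ (a i : ℕ))

variable {R m} {A B : Type*} [CommRing A] [Algebra R A] [CommRing B] [Algebra R B]

def circulantEval (y : ι → A) (hy : y ∈ rootsOfUnityPi m A) : CirculantAlgebra R m →ₐ[R] A :=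
  Ideal.Quotient.liftₐ _ (aeval y) fun p hp => by
    have : circulantIdeal R m ≤ RingHom.ker (aeval (R := R) y) :=
      Ideal.span_le.mpr <| Set.range_subset_iff.mpr fun i => by simp [hy i]
    exact this hp

@[simp]
theorem circulantEval_mk (y : ι → A) (hy : y ∈ rootsOfUnityPi m A) (p : MvPolynomial ι R) :
    circulantEval y hy (Ideal.Quotient.mk _ p) = aeval y p := rfl

@[simp]
theorem circulantEval_circulantMonomial [Fintype ι] (y : ι → A) (hy : y ∈ rootsOfUnityPi m A)
    (a : ∀ i, Fin (m i)) :
    circulantEval y hy (circulantMonomial R m a) = prodPowHom A (fun i => a i) y := by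
  simp [circulantMonomial, prodPowHom]

theorem map_circulantEval (φ : A →ₐ[R] B) (y : ι → A) (hy : y ∈ rootsOfUnityPi m A)
    (q : CirculantAlgebra R m) :
    φ (circulantEval y hy q) =
      circulantEval (φ ∘ y) (fun i => by rw [Function.comp_apply, ← map_pow, hy i, map_one]) q := by
  obtain ⟨p, rfl⟩ := Ideal.Quotient.mk_surjective q
  exact comp_aeval_apply y φ p

theorem circulantEval_mem_adjoin {k L : Type*} [Field k] [Field L] [Algebra k L] {m : ι → ℕ}
    (y : ι → L) (hy : y ∈ rootsOfUnityPi m L) (q : CirculantAlgebra k m) :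
    circulantEval y hy q ∈ IntermediateField.adjoin k (Set.range y) := by
  obtain ⟨p, rfl⟩ := Ideal.Quotient.mk_surjective q
  refine IntermediateField.algebra_adjoin_le_adjoin k _ ?_
  rw [Algebra.adjoin_range_eq_range_aeval]
  exact ⟨p, rfl⟩

theorem span_circulantMonomial [Fintype ι] (hm : ∀ i, 0 < m i) :
    Submodule.span R (Set.range (circulantMonomial R m)) = ⊤ := by
  classical
  have hX (i : ι) : (Ideal.Quotient.mk (circulantIdeal R m) (X i)) ^ m i = 1 := by
    rw [← map_pow, ← map_one (Ideal.Quotient.mk _), Ideal.Quotient.eq]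
    exact Ideal.subset_span ⟨i, rfl⟩
  have hmonomial (s : ι →₀ ℕ) : Ideal.Quotient.mk _ (monomial s 1) =
      circulantMonomial R m fun i => ⟨s i % m i, Nat.mod_lt _ (hm i)⟩ := by
    rw [monomial_eq, C_1, one_mul, Finsupp.prod_fintype _ _ (by simp), circulantMonomial]
    simp only [map_prod, map_pow]
    exact Finset.prod_congr rfl fun i _ => pow_eq_pow_mod _ (hX i)
  have hmk : LinearMap.range (Ideal.Quotient.mkₐ R (circulantIdeal R m)).toLinearMap = ⊤ :=
    LinearMap.range_eq_top.mpr (Ideal.Quotient.mkₐ_surjective R _)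
  rw [eq_top_iff, ← hmk, LinearMap.range_eq_map, ← (basisMonomials ι R).span_eq,
    Submodule.map_span, Submodule.span_le, coe_basisMonomials]
  rintro _ ⟨_, ⟨s, rfl⟩, rfl⟩
  exact Submodule.subset_span ⟨_, (hmonomial s).symm⟩

end Circulant

section Field

variable {k : Type*} [Field k] [Fintype ι] [DecidableEq ι] {m : ι → ℕ}

theorem eq_zero_of_forall_circulantEval_sum_eq_zero {L : Type*} [Field L] [Algebra k L]
    {ζ : ι → L} (hζ : ∀ i, IsPrimitiveRoot (ζ i) (m i)) (c : (∀ i, Fin (m i)) → k)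
    (h : ∀ y (hy : y ∈ rootsOfUnityPi m L),
      circulantEval y hy (∑ a, c a • circulantMonomial k m a) = 0) :
    c = 0 := by
  have li := linearIndependent_prodPowHom hζ
  rw [Fintype.linearIndependent_iff] at li
  have hc := li (fun a => algebraMap k L (c a)) <| funext fun y => by
    have hy := h y y.2
    rw [map_sum] at hy
    simp only [map_smul, circulantEval_circulantMonomial, Algebra.smul_def] at hy
    rw [Finset.sum_apply, Pi.zero_apply, ← hy]
    rfl
  funext a
  exact (algebraMap k L).injective (by simpa using hc a)

variable (k m) in
noncomputable def circulantBasis [∀ i, NeZero (m i : k)] :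
    Module.Basis (∀ i, Fin (m i)) k (CirculantAlgebra k m) :=
  have hζ (i : ι) := HasEnoughRootsOfUnity.exists_primitiveRoot (AlgebraicClosure k) (m i)
  Module.Basis.mk (v := circulantMonomial k m)
    (Fintype.linearIndependent_iff.mpr fun c hc => congrFun
      (eq_zero_of_forall_circulantEval_sum_eq_zero (fun i => (hζ i).choose_spec) c
        fun y hy => by rw [hc, map_zero]))
    (span_circulantMonomial fun i => (NeZero.of_neZero_natCast k).pos).ge

variable [∀ i, NeZero (m i : k)]

@[simp]
theorem circulantBasis_apply (a : ∀ i, Fin (m i)) :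
    circulantBasis k m a = circulantMonomial k m a := by
  simp [circulantBasis]

instance : FiniteDimensional k (CirculantAlgebra k m) :=
  Module.Finite.of_basis (circulantBasis k m)

theorem finrank_circulantAlgebra : Module.finrank k (CirculantAlgebra k m) = ∏ i, m i := by
  simp [Module.finrank_eq_card_basis (circulantBasis k m)]

theorem eq_zero_of_forall_circulantEval_eq_zero {L : Type*} [Field L] [Algebra k L]
    {ζ : ι → L} (hζ : ∀ i, IsPrimitiveRoot (ζ i) (m i)) (q : CirculantAlgebra k m)
    (h : ∀ y (hy : y ∈ rootsOfUnityPi m L), circulantEval y hy q = 0) :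
    q = 0 := by
  have hq := eq_zero_of_forall_circulantEval_sum_eq_zero hζ ((circulantBasis k m).repr q)
    fun y hy => by simpa only [← circulantBasis_apply, Module.Basis.sum_repr] using h y hy
  simpa using hq

end Field

section Galois

variable {k K : Type*} [Field k] [Field K] [Algebra k K]

theorem IntermediateField.fixingSubgroup_adjoin_range (x : ι → K) :
    (adjoin k (Set.range x)).fixingSubgroup = MulAction.stabilizer (K ≃ₐ[k] K) x :=
  le_antisymm (fun σ hσ => _root_.funext fun i =>
      (mem_fixingSubgroup_iff _ σ).mp hσ (x i) (subset_adjoin _ _ (Set.mem_range_self i)))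
    ((le_iff_le _ _).mp <| adjoin_le_iff.mpr <| Set.range_subset_iff.mpr fun i σ => congrFun σ.2 i)

theorem IntermediateField.finrank_adjoin_range_eq_natCard_orbit [IsGalois k K] (x : ι → K) :
    Module.finrank k (adjoin k (Set.range x)) = Nat.card (MulAction.orbit (K ≃ₐ[k] K) x) := by
  rw [finrank_eq_fixingSubgroup_index, fixingSubgroup_adjoin_range, MulAction.index_stabilizer,
    Nat.card_coe_set_eq]

theorem orbit_algEquiv_pi (x : ι → K) :
    MulAction.orbit (K ≃ₐ[k] K) x = {y | ∃ σ : K ≃ₐ[k] K, y = fun i => σ (x i)} :=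
  Set.ext fun _ => ⟨fun ⟨σ, h⟩ => ⟨σ, h.symm⟩, fun ⟨σ, h⟩ => ⟨σ, h.symm⟩⟩

theorem isCyclotomicExtension_adjoin_setOf_pow_eq_one (m : ι → ℕ) (hm : ∀ i, m i ≠ 0)
    (hK : ∀ i, ∃ r : K, IsPrimitiveRoot r (m i)) :
    IsCyclotomicExtension (Set.range m) k
      (IntermediateField.adjoin k {z : K | ∃ i, z ^ m i = 1}) := by
  have : {z : K | ∃ i, z ^ m i = 1} = {z | ∃ n ∈ Set.range m, n ≠ 0 ∧ z ^ n = 1} := by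
    ext z
    simp only [Set.mem_ofPred_eq, Set.exists_range_iff]
    exact exists_congr fun i => (and_iff_right (hm i)).symm
  rw [this]
  exact IntermediateField.isCyclotomicExtension_adjoin_of_exists_isPrimitiveRoot _ k K
    (by rintro _ ⟨i, rfl⟩ -; exact hK i)

end Galois

section Wedderburn

open IntermediateField

variable (k : Type*) {K : Type*} [Field k] [Field K] [Algebra k K] {m : ι → ℕ}

noncomputable def circulantEvalPi (S : Finset (ι → K)) (hSV : ∀ x ∈ S, x ∈ rootsOfUnityPi m K) :
    CirculantAlgebra k m →ₐ[k] ∀ x : S, adjoin k (Set.range (x : ι → K)) :=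
  AlgHom.pi fun x => (circulantEval x.1 (hSV x x.2)).codRestrict
    (adjoin k (Set.range x.1)).toSubalgebra (circulantEval_mem_adjoin _ _)

variable {k} [Fintype ι] [∀ i, NeZero (m i : k)] {ζ : ι → K} {S : Finset (ι → K)}

theorem circulantEvalPi_injective [DecidableEq ι] (hζ : ∀ i, IsPrimitiveRoot (ζ i) (m i))
    (hSV : ∀ x ∈ S, x ∈ rootsOfUnityPi m K)
    (hS : ∀ y ∈ rootsOfUnityPi m K, ∃ x ∈ S, ∃ σ : K ≃ₐ[k] K, y = fun i => σ (x i)) :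
    Function.Injective (circulantEvalPi k S hSV) := by
  refine (injective_iff_map_eq_zero _).mpr fun q hq =>
    eq_zero_of_forall_circulantEval_eq_zero hζ q fun y hy => ?_
  obtain ⟨x, hx, σ, rfl⟩ := hS y hy
  have hxq : circulantEval x (hSV x hx) q = 0 := congrArg Subtype.val (congrFun hq ⟨x, hx⟩)
  have := map_circulantEval (σ : K →ₐ[k] K) x (hSV x hx) q
  rw [hxq, map_zero] at this
  exact this.symm

theorem finrank_pi_adjoin_eq_prod [IsGalois k K] [FiniteDimensional k K]
    (hζ : ∀ i, IsPrimitiveRoot (ζ i) (m i)) (hSV : ∀ x ∈ S, x ∈ rootsOfUnityPi m K)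
    (hS : ∀ y ∈ rootsOfUnityPi m K, ∃! x, x ∈ S ∧ ∃ σ : K ≃ₐ[k] K, y = fun i => σ (x i)) :
    Module.finrank k (∀ x : S, adjoin k (Set.range (x : ι → K))) = ∏ i, m i := by
  have hm (i : ι) : 0 < m i := (NeZero.of_neZero_natCast k).pos
  have hV := natCard_rootsOfUnityPi hm hζ
  have : Finite (rootsOfUnityPi m K) :=
    Nat.finite_of_card_ne_zero (hV ▸ Finset.prod_ne_zero_iff.mpr fun i _ => (hm i).ne')
  have hO : ∀ x ∈ S, {y | ∃ σ : K ≃ₐ[k] K, y = fun i => σ (x i)} ⊆ rootsOfUnityPi m K := by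
    rintro x hx _ ⟨σ, rfl⟩ i
    rw [← map_pow, hSV x hx i, map_one]
  simp only [Module.finrank_pi_fintype, finrank_adjoin_range_eq_natCard_orbit, orbit_algEquiv_pi]
  rw [← hV, Finset.sum_coe_sort S fun x => Nat.card {y | ∃ σ : K ≃ₐ[k] K, y = fun i => σ (x i)}]
  exact (Set.natCard_eq_sum_natCard_of_existsUnique hO hS).symm

end Wedderburn

end

theorem stmt_12_general {k : Type*} [Field k] (n : ℕ) (m : Fin n → ℕ)
    (hchar : ∀ i, ¬ (ringChar k ∣ m i))
    (K : IntermediateField k (AlgebraicClosure k))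
    (hK : K = IntermediateField.adjoin k {z : AlgebraicClosure k | ∃ i, z ^ m i = 1})
    (S : Finset (Fin n → K))
    (hSV : ∀ x ∈ S, ∀ i, x i ^ m i = 1)
    (hrep : ∀ y : Fin n → K, (∀ i, y i ^ m i = 1) →
      ∃! x, x ∈ S ∧ ∃ σ : K ≃ₐ[k] K, y = fun i => σ (x i)) :
    (∃ e : (MvPolynomial (Fin n) k ⧸
              Ideal.span (Set.range fun i : Fin n => (X i : MvPolynomial (Fin n) k) ^ m i - 1)) ≃+*
            (∀ x : S, (IntermediateField.adjoin k (Set.range (x : Fin n → K)) : IntermediateField k K)),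
        ∀ (f : MvPolynomial (Fin n) k) (x : S),
          (e (Ideal.Quotient.mk _ f) x : K) =
            eval (x : Fin n → K) (MvPolynomial.map (algebraMap k K) f)) ∧
    ∀ x ∈ S,
      Module.finrank k (IntermediateField.adjoin k (Set.range x) : IntermediateField k K) =
        Nat.card {y : Fin n → K | ∃ σ : K ≃ₐ[k] K, y = fun i => σ (x i)} := by
  have (i : Fin n) : NeZero (m i : k) := ⟨fun h => hchar i ((ringChar.spec k (m i)).mp h)⟩
  have hm (i : Fin n) : m i ≠ 0 := (NeZero.of_neZero_natCast k).ne
  have : IsCyclotomicExtension (Set.range m) k K := hK ▸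
    isCyclotomicExtension_adjoin_setOf_pow_eq_one m hm
      fun i => HasEnoughRootsOfUnity.exists_primitiveRoot _ (m i)
  have := IsCyclotomicExtension.isGalois (Set.range m) k K
  have := IsCyclotomicExtension.finite (Set.range m) k K
  choose ζ hζ using fun i =>
    IsCyclotomicExtension.exists_isPrimitiveRoot k K (Set.mem_range_self i) (hm i)
  have hinj := circulantEvalPi_injective hζ hSV fun y hy => (hrep y hy).exists
  have hdim : Module.finrank k (CirculantAlgebra k m) =
      Module.finrank k (∀ x : S, IntermediateField.adjoin k (Set.range (x : Fin n → K))) := by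
    rw [finrank_circulantAlgebra, finrank_pi_adjoin_eq_prod hζ hSV hrep]
  have hsurj := (LinearMap.injective_iff_surjective_of_finrank_eq_finrank
    (f := (circulantEvalPi k S hSV).toLinearMap) hdim).mp hinj
  refine ⟨⟨(AlgEquiv.ofBijective _ ⟨hinj, hsurj⟩).toRingEquiv, fun f x => ?_⟩,
    fun x _ => by rw [IntermediateField.finrank_adjoin_range_eq_natCard_orbit, orbit_algEquiv_pi]⟩
  rw [eval_map, ← aeval_def]
  rfl

theorem stmt_12 {k : Type*} [Field k] (n : ℕ) (m : Fin n → ℕ) (hm : ∀ i, 0 < m i)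
    (hchar : ∀ i, ¬ (ringChar k ∣ m i))
    (K : IntermediateField k (AlgebraicClosure k))
    (hK : K = IntermediateField.adjoin k {z : AlgebraicClosure k | ∃ i, z ^ m i = 1})
    (S : Finset (Fin n → K))
    (hSV : ∀ x ∈ S, ∀ i, x i ^ m i = 1)
    (hrep : ∀ y : Fin n → K, (∀ i, y i ^ m i = 1) →
      ∃! x, x ∈ S ∧ ∃ σ : K ≃ₐ[k] K, y = fun i => σ (x i)) :
    (∃ e : (MvPolynomial (Fin n) k ⧸
              Ideal.span (Set.range fun i : Fin n => (X i : MvPolynomial (Fin n) k) ^ m i - 1)) ≃+*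
            (∀ x : S, (IntermediateField.adjoin k (Set.range (x : Fin n → K)) : IntermediateField k K)),
        ∀ (f : MvPolynomial (Fin n) k) (x : S),
          (e (Ideal.Quotient.mk _ f) x : K) =
            eval (x : Fin n → K) (MvPolynomial.map (algebraMap k K) f)) ∧
    ∀ x ∈ S,
      Module.finrank k (IntermediateField.adjoin k (Set.range x) : IntermediateField k K) =
        Nat.card {y : Fin n → K | ∃ σ : K ≃ₐ[k] K, y = fun i => σ (x i)} :=
  stmt_12_general n m hchar K hK S hSV hrep
end

section
/- Let q be coprime to positive integers m₁,...,mₙ, and d = (d₁,...,dₙ) with dᵢ ∣ mᵢ. Under the action of multiplication by q on ℤ/m₁×...×ℤ/mₙ, every orbit contained in Z(d) has size lcm₁≤ᵢ≤ₙ(ord_{mᵢ/dᵢ}(q)), and the number of orbits in Z(d) equals (∏ᵢ φ(mᵢ/dᵢ)) / lcm₁≤ᵢ≤ₙ(ord_{mᵢ/dᵢ}(q)). -/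
lemma ord_pos (k q : ℕ) (hk : 0 < k) (hq : Nat.Coprime q k) : 0 < orderOf (q : ZMod k) := by
  haveI : NeZero k := ⟨hk.ne'⟩
  have h1 : (q : ZMod k) ^ k.totient = 1 := by
    have := Nat.ModEq.pow_totient hq
    have := (ZMod.natCast_eq_natCast_iff _ _ _).mpr this
    push_cast at this
    simpa using this
  exact orderOf_pos_iff.mpr (isOfFinOrder_iff_pow_eq_one.mpr ⟨k.totient, Nat.totient_pos.mpr hk, h1⟩)

lemma core1 (m d c : ℕ) (hm : 0 < m) (hdvd : d ∣ m) (a : ZMod m)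
    (ha : Nat.gcd a.val m = d) : a * (c : ZMod m) = a ↔ (c : ZMod (m / d)) = 1 := by
  haveI : NeZero m := ⟨hm.ne'⟩
  have hd0 : 0 < d := ha ▸ Nat.gcd_pos_of_pos_right _ hm
  set k := m / d with hk
  have hmk : m = d * k := (Nat.div_mul_cancel hdvd).symm.trans (mul_comm _ _)
  have hda : d ∣ a.val := ha ▸ Nat.gcd_dvd_left _ _
  set e := a.val / d with he
  have hae : a.val = d * e := (Nat.div_mul_cancel hda).symm.trans (mul_comm _ _)
  have hcop : Nat.Coprime e k := by
    have := Nat.coprime_div_gcd_div_gcd (m := a.val) (n := m) (ha ▸ hd0)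
    rwa [ha] at this
  have h1 : a * (c : ZMod m) = a ↔ ((a.val * c - a.val : ℤ) : ZMod m) = 0 := by
    constructor
    · intro h
      push_cast
      rw [ZMod.natCast_rightInverse a, h, sub_self]
    · intro h
      push_cast at h
      rw [ZMod.natCast_rightInverse a, sub_eq_zero] at h
      exact h
  rw [h1, ZMod.intCast_zmod_eq_zero_iff_dvd]
  have h2 : (a.val * c - a.val : ℤ) = (d * e) * ((c : ℤ) - 1) := by
    rw [hae]; push_cast; ring
  rw [h2, hmk]
  push_cast
  rw [mul_assoc, mul_dvd_mul_iff_left (by exact_mod_cast hd0.ne' : (d:ℤ) ≠ 0)]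
  have h3 : (k : ℤ) ∣ (e : ℤ) * ((c:ℤ) - 1) ↔ (k : ℤ) ∣ ((c:ℤ) - 1) := by
    constructor
    · exact fun h => (Nat.isCoprime_iff_coprime.mpr hcop.symm).dvd_of_dvd_mul_left h
    · exact fun h => h.mul_left _
  rw [h3]
  rw [show ((c:ℤ) - 1) = ((c:ℤ) - (1:ℕ)) by push_cast; ring]
  rw [← ZMod.intCast_zmod_eq_zero_iff_dvd]
  push_cast
  rw [sub_eq_zero]

lemma core2 (m d q t : ℕ) (hm : 0 < m) (hdvd : d ∣ m) (a : ZMod m)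
    (ha : Nat.gcd a.val m = d) :
    a * (q : ZMod m) ^ t = a ↔ orderOf (q : ZMod (m / d)) ∣ t := by
  have := core1 m d (q ^ t) hm hdvd a ha
  push_cast at this
  rw [this, orderOf_dvd_iff_pow_eq_one]

lemma tot_count (m d : ℕ) (hm : 0 < m) (hdvd : d ∣ m) :
    Nat.card {a : ZMod m // Nat.gcd a.val m = d} = Nat.totient (m / d) := by
  haveI : NeZero m := ⟨hm.ne'⟩
  have hd0 : 0 < d := Nat.pos_of_dvd_of_pos hdvd hm
  set k := m / d with hk
  have hk0 : 0 < k := Nat.div_pos (Nat.le_of_dvd hm hdvd) hd0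
  haveI : NeZero k := ⟨hk0.ne'⟩
  have hmk : m = d * k := (Nat.div_mul_cancel hdvd).symm.trans (mul_comm _ _)
  have hvlt : ∀ a : ZMod m, a.val < d * k := fun a => hmk ▸ a.val_lt
  have e1 : {a : ZMod m // Nat.gcd a.val m = d} ≃ {b : ZMod k // Nat.Coprime b.val k} := by
    refine ⟨fun a => ⟨((a.1.val / d : ℕ) : ZMod k), ?_⟩,
      fun b => ⟨((d * b.1.val : ℕ) : ZMod m), ?_⟩, ?_, ?_⟩
    · obtain ⟨a, ha⟩ := a
      have hlt : a.val / d < k := Nat.div_lt_of_lt_mul (hvlt a)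
      rw [Nat.Coprime, ZMod.val_natCast, Nat.mod_eq_of_lt hlt]
      have := Nat.coprime_div_gcd_div_gcd (m := a.val) (n := m) (ha ▸ hd0)
      rwa [ha, ← hk] at this
    · obtain ⟨b, hb⟩ := b
      have hlt : d * b.val < m := by
        rw [hmk]; exact (Nat.mul_lt_mul_left hd0).mpr b.val_lt
      rw [ZMod.val_natCast, Nat.mod_eq_of_lt hlt, hmk, Nat.gcd_mul_left, hb, mul_one]
    · rintro ⟨a, ha⟩
      have hda : d ∣ a.val := ha ▸ Nat.gcd_dvd_left _ _
      have hlt : a.val / d < k := Nat.div_lt_of_lt_mul (hvlt a)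
      apply Subtype.ext
      simp only [ZMod.val_natCast, Nat.mod_eq_of_lt hlt, Nat.mul_div_cancel' hda]
      exact ZMod.natCast_rightInverse a
    · rintro ⟨b, hb⟩
      have hlt : d * b.val < m := by
        rw [hmk]; exact (Nat.mul_lt_mul_left hd0).mpr b.val_lt
      apply Subtype.ext
      simp only [ZMod.val_natCast, Nat.mod_eq_of_lt hlt,
        Nat.mul_div_cancel_left _ hd0]
      exact ZMod.natCast_rightInverse b
  rw [Nat.card_congr e1, Nat.card_congr (ZMod.unitsEquivCoprime (n := k)).symm,
    Nat.card_eq_fintype_card, ZMod.card_units_eq_totient]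

theorem stmt_17 (q : ℕ) (n : ℕ) (m : Fin n → ℕ) (hm : ∀ i, 0 < m i)
    (hcop : ∀ i, Nat.Coprime q (m i))
    (d : Fin n → ℕ) (hd : ∀ i, d i ∣ m i) :
    (∀ x : ∀ i, ZMod (m i), (∀ i, Nat.gcd ((x i).val) (m i) = d i) →
      Nat.card (Set.range fun t : ℕ => fun i => x i * (q : ZMod (m i)) ^ t) =
        Finset.univ.lcm (fun i => orderOf (q : ZMod (m i / d i)))) ∧
    Nat.card {s : Set (∀ i, ZMod (m i)) |
        ∃ x : ∀ i, ZMod (m i), (∀ i, Nat.gcd ((x i).val) (m i) = d i) ∧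
          s = Set.range fun t : ℕ => fun i => x i * (q : ZMod (m i)) ^ t} =
      (∏ i, Nat.totient (m i / d i)) /
        Finset.univ.lcm (fun i => orderOf (q : ZMod (m i / d i))) := by
  classical
  haveI instF : ∀ i, Fintype (ZMod (m i)) := fun i => @ZMod.fintype (m i) ⟨(hm i).ne'⟩
  set L := Finset.univ.lcm (fun i => orderOf (q : ZMod (m i / d i))) with hLdef
  have hord : ∀ i, 0 < orderOf (q : ZMod (m i / d i)) := by
    intro i
    have hk0 : 0 < m i / d i :=
      Nat.div_pos (Nat.le_of_dvd (hm i) (hd i)) (Nat.pos_of_dvd_of_pos (hd i) (hm i))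
    exact ord_pos _ _ hk0 ((hcop i).coprime_dvd_right (Nat.div_dvd_of_dvd (hd i)))
  have hL0 : 0 < L := by
    rcases Nat.eq_zero_or_pos L with h | h
    · rw [hLdef, Finset.lcm_eq_zero_iff] at h
      obtain ⟨i, -, hi⟩ := h
      exact absurd hi (hord i).ne'
    · exact h
  -- key characterization
  set P : (∀ i, ZMod (m i)) → Prop := fun x => ∀ i, Nat.gcd ((x i).val) (m i) = d i with hPdef
  have keyA : ∀ x, P x → ∀ t : ℕ,
      ((∀ i, x i * (q : ZMod (m i)) ^ t = x i) ↔ L ∣ t) := by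
    intro x hx t
    constructor
    · intro h
      rw [hLdef]
      exact Finset.lcm_dvd fun i _ => (core2 (m i) (d i) q t (hm i) (hd i) (x i) (hx i)).mp (h i)
    · intro h i
      exact (core2 (m i) (d i) q t (hm i) (hd i) (x i) (hx i)).mpr
        ((Finset.dvd_lcm (Finset.mem_univ i)).trans h)
  have hper : ∀ x, P x → ∀ u r : ℕ, L ∣ u → ∀ i,
      x i * (q : ZMod (m i)) ^ (u + r) = x i * (q : ZMod (m i)) ^ r := by
    intro x hx u r hu i
    rw [pow_add, ← mul_assoc, (keyA x hx u).mpr hu i]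
  -- part 1
  have part1 : ∀ x, P x →
      Nat.card (Set.range fun t : ℕ => fun i => x i * (q : ZMod (m i)) ^ t) = L := by
    intro x hx
    set f : ℕ → ∀ i, ZMod (m i) := fun t => fun i => x i * (q : ZMod (m i)) ^ t with hfdef
    have hfmod : ∀ t, f t = f (t % L) := by
      intro t
      funext i
      show x i * _ ^ t = x i * _ ^ (t % L)
      conv_lhs => rw [← Nat.div_add_mod t L]
      exact hper x hx _ _ (Dvd.intro _ rfl) i
    have hsub : ∀ s t : ℕ, f s = f t → s ≤ t → L ∣ t - s := by
      intro s t h hst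
      apply (keyA x hx (t - s)).mp
      intro i
      have hu : IsUnit ((q : ZMod (m i)) ^ s) :=
        ((ZMod.isUnit_iff_coprime q (m i)).mpr (hcop i)).pow s
      apply hu.mul_right_cancel
      rw [mul_assoc, ← pow_add, Nat.sub_add_cancel hst]
      exact (congrFun h i).symm
    have hinj : Set.InjOn f ↑(Finset.range L) := by
      intro s hs t ht hst
      simp only [Finset.coe_range, Set.mem_Iio] at hs ht
      rcases le_total s t with h | h
      · have := Nat.lt_of_lt_of_le (Nat.sub_lt_succ t s) (Nat.succ_le_of_lt ht)
        have hdvd := hsub s t hst h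
        have := Nat.eq_zero_of_dvd_of_lt hdvd (by omega)
        omega
      · have hdvd := hsub t s hst.symm h
        rcases Nat.eq_zero_or_pos (s - t) with h0 | h0
        · omega
        · have := Nat.eq_zero_of_dvd_of_lt hdvd (by omega)
          omega
    have hrange : Set.range f = f '' ↑(Finset.range L) := by
      apply Set.Subset.antisymm
      · rintro y ⟨t, rfl⟩
        exact ⟨t % L, by simpa using Nat.mod_lt t hL0, (hfmod t).symm⟩
      · rintro y ⟨t, -, rfl⟩
        exact ⟨t, rfl⟩
    rw [hrange, Nat.card_coe_set_eq, Set.ncard_image_of_injOn hinj,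
      Set.ncard_coe_finset, Finset.card_range]
  -- part 2
  set F : (∀ i, ZMod (m i)) → Set (∀ i, ZMod (m i)) :=
    fun x => Set.range (fun t : ℕ => fun i => x i * (q : ZMod (m i)) ^ t) with hFdef
  have hself : ∀ x, x ∈ F x := by
    intro x
    exact ⟨0, by funext i; simp⟩
  have hinv : ∀ x, P x → ∀ t : ℕ, P (fun i => x i * (q : ZMod (m i)) ^ t) := by
    intro x hx t i
    have hcast : x i * (q : ZMod (m i)) ^ t = (((x i).val * q ^ t : ℕ) : ZMod (m i)) := by
      haveI : NeZero (m i) := ⟨(hm i).ne'⟩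
      push_cast
      rw [ZMod.natCast_rightInverse]
    show Nat.gcd (x i * (q : ZMod (m i)) ^ t).val (m i) = d i
    rw [hcast, ZMod.val_natCast, ← Nat.gcd_rec, Nat.gcd_comm,
      Nat.Coprime.gcd_mul_right_cancel _ (Nat.Coprime.pow_left t (hcop i))]
    exact hx i
  have hmem : ∀ x, P x → ∀ y ∈ F x, F y = F x := by
    intro x hx y hy
    obtain ⟨t, rfl⟩ := hy
    apply Set.Subset.antisymm
    · rintro z ⟨s, rfl⟩
      refine ⟨t + s, ?_⟩
      funext i
      show x i * (q : ZMod (m i)) ^ (t + s) = x i * (q : ZMod (m i)) ^ t * (q : ZMod (m i)) ^ s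
      rw [pow_add, mul_assoc]
    · obtain ⟨c, hc⟩ : ∃ c, L = c + 1 := ⟨L - 1, by omega⟩
      rintro z ⟨r, rfl⟩
      refine ⟨t * c + r, ?_⟩
      funext i
      show (x i * (q : ZMod (m i)) ^ t) * (q : ZMod (m i)) ^ (t * c + r) = x i * (q : ZMod (m i)) ^ r
      rw [mul_assoc, ← pow_add,
        show t + (t * c + r) = t * L + r by rw [hc]; ring]
      exact hper x hx (t * L) r (dvd_mul_left L t) i
  set Zf : Finset (∀ i, ZMod (m i)) := Finset.univ.filter P with hZf
  set Sf : Finset (Set (∀ i, ZMod (m i))) := Zf.image F with hSf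
  have hSset : {s : Set (∀ i, ZMod (m i)) | ∃ x, P x ∧ s = F x} = ↑Sf := by
    ext s
    simp only [Set.mem_setOf_eq, hSf, Finset.coe_image, Set.mem_image, Finset.mem_coe,
      hZf, Finset.mem_filter, Finset.mem_univ, true_and]
    constructor
    · rintro ⟨x, hx, rfl⟩; exact ⟨x, hx, rfl⟩
    · rintro ⟨x, hx, rfl⟩; exact ⟨x, hx, rfl⟩
  have hfiber : ∀ s ∈ Sf, (Zf.filter (fun x => F x = s)).card = L := by
    intro s hs
    rw [hSf, Finset.mem_image] at hs
    obtain ⟨x, hxZ, rfl⟩ := hs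
    rw [hZf, Finset.mem_filter] at hxZ
    have hx : P x := hxZ.2
    have hset : (↑(Zf.filter (fun y => F y = F x)) : Set (∀ i, ZMod (m i))) = F x := by
      ext y
      simp only [Finset.coe_filter, Set.mem_setOf_eq, hZf, Finset.mem_filter,
        Finset.mem_univ, true_and]
      constructor
      · rintro ⟨hy, hFy⟩; rw [← hFy]; exact hself y
      · intro hy
        have hyP : P y := by
          obtain ⟨t, rfl⟩ := hy
          exact hinv x hx t
        exact ⟨hyP, hmem x hx y hy⟩
    calc (Zf.filter (fun y => F y = F x)).card
        = (↑(Zf.filter (fun y => F y = F x)) : Set (∀ i, ZMod (m i))).ncard :=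
          (Set.ncard_coe_finset _).symm
      _ = (F x).ncard := by rw [hset]
      _ = Nat.card (F x) := (Nat.card_coe_set_eq _).symm
      _ = L := part1 x hx
  have hcards : Zf.card = Sf.card * L := by
    rw [Finset.card_eq_sum_card_fiberwise (f := F) (t := Sf)
      (fun x hx => Finset.mem_image_of_mem F hx)]
    rw [Finset.sum_congr rfl hfiber, Finset.sum_const, smul_eq_mul]
  have hZcard : Zf.card = ∏ i, Nat.totient (m i / d i) := by
    rw [hZf, ← Fintype.card_subtype, ← Nat.card_eq_fintype_card,
      Nat.card_congr (Equiv.subtypePiEquivPi (p := fun i a => Nat.gcd (ZMod.val a) (m i) = d i)),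
      Nat.card_pi]
    exact Finset.prod_congr rfl fun i _ => tot_count (m i) (d i) (hm i) (hd i)
  refine ⟨fun x hx => part1 x hx, ?_⟩
  show Nat.card {s : Set (∀ i, ZMod (m i)) | ∃ x, P x ∧ s = F x} = (∏ i, Nat.totient (m i / d i)) / L
  rw [hSset, Nat.card_coe_set_eq, Set.ncard_coe_finset, ← hZcard, hcards,
    Nat.mul_div_cancel _ hL0]
end
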